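/- Let ρ : ℝ → ℝ be infinitely differentiable, nonnegative, supported in [−1,1], with ∫ρ = 1; for ε > 0 set ρ_ε(z) = ε⁻¹ρ(z/ε), and for h ∈ ℝ define K_{ε,h}(z) = ∫_ℝ ρ_ε(y)·max(z − y − h, 0) dy. Let h < h' and ε, ε' > 0 satisfy ε + ε' ≤ (h' − h)/2. Then for every z ∈ ℝ with K_{ε',h'}(z) > 0 one has K_{ε,h}(z) ≥ (h' − h)/2. -/

import Mathlib

open MeasureTheory

/-- The smoothed truncation `K_{ε,h} = ρ_ε ⋆ (· − h)₊`, where `ρ_ε(z) = ε⁻¹ ρ(z/ε)`: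
`K_{ε,h}(z) = ∫ ρ_ε(y) · max(z − y − h, 0) dy`. -/
noncomputable def mollK (ρ : ℝ → ℝ) (ε h z : ℝ) : ℝ :=
  ∫ y : ℝ, (ε⁻¹ * ρ (y / ε)) * max (z - y - h) 0

/-!
Since `ρ_ε` is supported in `[-ε, ε]`, `K_{ε,h}(z)` vanishes for `z ≤ h - ε`, while for every `z`
it is at least `z - h - ε`, because `(z - y - h)₊ ≥ z - h - ε` on that support and `∫ ρ_ε = 1`.
So `K_{ε',h'}(z) > 0` forces `z > h' - ε'`, and then
`K_{ε,h}(z) ≥ z - h - ε > h' - h - ε - ε' ≥ (h' - h)/2`.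
-/

section Rescale

variable {ρ : ℝ → ℝ} {ε : ℝ}

theorem abs_le_of_comp_div_ne_zero (hρ_supp : Function.support ρ ⊆ Set.Icc (-1 : ℝ) 1)
    (hε : 0 < ε) {y : ℝ} (hy : ρ (y / ε) ≠ 0) : |y| ≤ ε := by
  have hy' : |y / ε| ≤ 1 := abs_le.mpr (hρ_supp hy)
  rwa [abs_div, abs_of_pos hε, div_le_one hε] at hy'

theorem integral_inv_mul_comp_div (hε : 0 < ε) :
    ∫ y : ℝ, ε⁻¹ * ρ (y / ε) = ∫ y : ℝ, ρ y := by
  rw [integral_const_mul, Measure.integral_comp_div, abs_of_pos hε, smul_eq_mul,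
    inv_mul_cancel_left₀ hε.ne']

theorem integrable_inv_mul_comp_div_mul (hρ : Integrable ρ)
    (hρ_supp : Function.support ρ ⊆ Set.Icc (-1 : ℝ) 1) (hε : 0 < ε) {g : ℝ → ℝ}
    (hg : Continuous g) : Integrable fun y => ε⁻¹ * ρ (y / ε) * g y := by
  have hsupp : Function.support (fun y => ε⁻¹ * ρ (y / ε) * g y) ⊆ Set.Icc (-ε) ε :=
    fun y hy => abs_le.mp <| abs_le_of_comp_div_ne_zero hρ_supp hε
      (right_ne_zero_of_mul (left_ne_zero_of_mul hy))
  rw [← integrableOn_iff_integrable_of_support_subset hsupp]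
  exact ((hρ.comp_div hε.ne').const_mul ε⁻¹).integrableOn.mul_continuousOn hg.continuousOn
    isCompact_Icc

end Rescale

section MollK

variable {ρ : ℝ → ℝ} {ε h : ℝ}

theorem mollK_eq_zero_of_le (hρ_supp : Function.support ρ ⊆ Set.Icc (-1 : ℝ) 1) (hε : 0 < ε)
    {z : ℝ} (hz : z ≤ h - ε) : mollK ρ ε h z = 0 := by
  refine integral_eq_zero_of_ae (Filter.Eventually.of_forall fun y => ?_)
  by_cases hy : ρ (y / ε) = 0
  · simp [hy]
  · have := (abs_le.mp (abs_le_of_comp_div_ne_zero hρ_supp hε hy)).1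
    simp [max_eq_right (show z - y - h ≤ 0 by linarith)]

theorem sub_sub_le_mollK (hρ_nonneg : ∀ x, 0 ≤ ρ x)
    (hρ_supp : Function.support ρ ⊆ Set.Icc (-1 : ℝ) 1) (hρ_int : ∫ x : ℝ, ρ x = 1)
    (hε : 0 < ε) (z : ℝ) : z - h - ε ≤ mollK ρ ε h z := by
  have hρ : Integrable ρ := .of_integral_ne_zero (by simp [hρ_int])
  have hbound : ∀ y, ε⁻¹ * ρ (y / ε) * (z - h - ε) ≤ ε⁻¹ * ρ (y / ε) * max (z - y - h) 0 := by
    intro y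
    by_cases hy : ρ (y / ε) = 0
    · simp [hy]
    · have := (abs_le.mp (abs_le_of_comp_div_ne_zero hρ_supp hε hy)).2
      exact mul_le_mul_of_nonneg_left (le_max_of_le_left (by linarith))
        (mul_nonneg (inv_nonneg.mpr hε.le) (hρ_nonneg _))
  calc z - h - ε = ∫ y : ℝ, ε⁻¹ * ρ (y / ε) * (z - h - ε) := by
        rw [integral_mul_const, integral_inv_mul_comp_div hε, hρ_int, one_mul]
    _ ≤ mollK ρ ε h z :=
        integral_mono (integrable_inv_mul_comp_div_mul hρ hρ_supp hε continuous_const)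
          (integrable_inv_mul_comp_div_mul hρ hρ_supp hε (by fun_prop)) hbound

end MollK

theorem stmt_12_general (ρ : ℝ → ℝ) (hρ_nonneg : ∀ x, 0 ≤ ρ x)
    (hρ_supp : Function.support ρ ⊆ Set.Icc (-1 : ℝ) 1) (hρ_int : ∫ x : ℝ, ρ x = 1)
    (h h' ε ε' : ℝ) (hε : 0 < ε) (hε' : 0 < ε')
    (hsum : ε + ε' ≤ (h' - h) / 2) :
    ∀ z : ℝ, 0 < mollK ρ ε' h' z → (h' - h) / 2 ≤ mollK ρ ε h z := by
  intro z hz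
  have hz' : h' - ε' < z :=
    lt_of_not_ge fun hle => hz.ne' (mollK_eq_zero_of_le hρ_supp hε' hle)
  linarith [sub_sub_le_mollK (h := h) hρ_nonneg hρ_supp hρ_int hε z]

/-- Level-set nesting of consecutive smoothed cutoffs: if `h < h'` and
`ε, ε' > 0` with `ε + ε' ≤ (h' − h)/2`, then `K_{ε',h'}(z) > 0` implies
`K_{ε,h}(z) ≥ (h' − h)/2`. -/
theorem stmt_12 (ρ : ℝ → ℝ) (hρ_smooth : ContDiff ℝ (⊤ : ℕ∞) ρ) (hρ_nonneg : ∀ x, 0 ≤ ρ x)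
    (hρ_supp : Function.support ρ ⊆ Set.Icc (-1 : ℝ) 1) (hρ_int : ∫ x : ℝ, ρ x = 1)
    (h h' ε ε' : ℝ) (hhh : h < h') (hε : 0 < ε) (hε' : 0 < ε')
    (hsum : ε + ε' ≤ (h' - h) / 2) :
    ∀ z : ℝ, 0 < mollK ρ ε' h' z → (h' - h) / 2 ≤ mollK ρ ε h z :=
  stmt_12_general ρ hρ_nonneg hρ_supp hρ_int h h' ε ε' hε hε' hsum
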